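/- Let α_1, ..., α_{n-1} be the standard basis of Λ = Z^{n-1} and define ξ_l(λ) = λ_l - λ_{l+1} for λ = Σ λ_i α_i (with λ_0 = λ_n = 0). Let λ ∈ Z_{≥0}^{n-1} have support an interval {i, ..., i+K-1}, and let j be an index in the support with λ_j minimal. Set μ = λ_j(α_i + ... + α_{i+K-1}) and λ' = λ - μ. Then λ' ∈ Z_{≥0}^{n-1}, the support of λ' is strictly contained in the support of λ, and for every l, ξ_l(μ) and ξ_l(λ') have the same sign (i.e., ξ_l(μ)·ξ_l(λ') ≥ 0). -/
import Mathlib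


/-- Combinatorial core of the generation argument for the associated graded Coulomb
branch: let `λ ∈ ℤ_{≥0}^{n-1}` (coordinates `lam l`, indexed by `l ≥ 1` and vanishing
elsewhere) have support equal to the interval `{i, ..., i+K-1}`, and let `j` be an index
in the support where `λ_j` is minimal.  Set `μ = λ_j (α_i + ... + α_{i+K-1})` and
`λ' = λ - μ`.  Then `λ'` has nonnegative coordinates, its support is strictly contained
in that of `λ`, and `ξ_l(μ)` and `ξ_l(λ')` have the same sign for every `l`,
where `ξ_l(v) = v_l - v_{l+1}`. -/
theorem support_interval_splitting (lam : ℕ → ℤ) (i K j : ℕ)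
    (hpos : ∀ l, 0 ≤ lam l)
    (hi : 1 ≤ i) (hK : 1 ≤ K)
    (hsupp : ∀ l, lam l ≠ 0 ↔ (i ≤ l ∧ l ≤ i + K - 1))
    (hj : i ≤ j ∧ j ≤ i + K - 1)
    (hmin : ∀ l, i ≤ l → l ≤ i + K - 1 → lam j ≤ lam l) :
    let mu : ℕ → ℤ := fun l => if i ≤ l ∧ l ≤ i + K - 1 then lam j else 0
    let lam' : ℕ → ℤ := fun l => lam l - mu l
    let xi : (ℕ → ℤ) → ℕ → ℤ := fun v l => v l - v (l + 1)
    (∀ l, 0 ≤ lam' l) ∧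
    {l | lam' l ≠ 0} ⊂ {l | lam l ≠ 0} ∧
    (∀ l, 0 ≤ xi mu l * xi lam' l) := by
  intro mu lam' xi
  have hzero : ∀ l, ¬ (i ≤ l ∧ l ≤ i + K - 1) → lam l = 0 := fun l h => by
    by_contra h'; exact h ((hsupp l).mp h')
  have hjpos : 0 ≤ lam j := hpos j
  refine ⟨?_, ⟨?_, ?_⟩, ?_⟩
  · intro l
    by_cases h : i ≤ l ∧ l ≤ i + K - 1
    · simp only [lam', mu, if_pos h]
      linarith [hmin l h.1 h.2]
    · simp only [lam', mu, if_neg h]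
      linarith [hpos l]
  · intro l hl
    simp only [Set.mem_setOf_eq] at hl ⊢
    by_cases h : i ≤ l ∧ l ≤ i + K - 1
    · exact (hsupp l).mpr h
    · exfalso; apply hl
      simp only [lam', mu, if_neg h, hzero l h, sub_zero]
  · intro h
    have hj' : lam' j ≠ 0 := h ((hsupp j).mpr hj)
    apply hj'
    simp only [lam', mu, if_pos hj, sub_self]
  · intro l
    by_cases h1 : i ≤ l ∧ l ≤ i + K - 1 <;>
      by_cases h2 : i ≤ l + 1 ∧ l + 1 ≤ i + K - 1
    · simp only [xi, mu, if_pos h1, if_pos h2, sub_self, zero_mul]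
      exact le_refl 0
    · -- l = i + K - 1
      simp only [xi, mu, lam', if_pos h1, if_neg h2, sub_zero]
      have hl1 : lam (l + 1) = 0 := hzero _ (by omega)
      have : lam j ≤ lam l := hmin l h1.1 h1.2
      rw [hl1]
      nlinarith
    · -- l + 1 = i
      simp only [xi, mu, lam', if_neg h1, if_pos h2, zero_sub]
      have hl0 : lam l = 0 := hzero _ h1
      have : lam j ≤ lam (l + 1) := hmin _ h2.1 h2.2
      rw [hl0]
      nlinarith
    · simp only [xi, mu, if_neg h1, if_neg h2, sub_self, zero_mul]
      exact le_refl 0
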